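/- Let U_0, …, U_d be a decomposition of V and let A : V → V be a linear map such that (A − q^{2i−d}I)U_i ⊆ U_{i+1} for 0 ≤ i ≤ d (where U_{d+1} = 0). For 0 ≤ j ≤ d let V_j denote the eigenspace of A for the eigenvalue q^{2j−d}. Then for every i with 0 ≤ i ≤ d one has V_i + V_{i+1} + ⋯ + V_d = U_i + U_{i+1} + ⋯ + U_d. -/

import Mathlib

/-!
Write `T i = U i ⊔ ⋯ ⊔ U d`, `S i = V i ⊔ ⋯ ⊔ V d` and `θ i = q ^ (2 i - d)`; the `θ i` are pairwise
distinct because `q` is not a root of unity. The hypothesis says that `A` preserves the flag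
`T 0 ⊇ T 1 ⊇ ⋯` and acts on `T i / T (i + 1) ≅ U i` as the scalar `θ i`.

`S ≤ T`: if `v` is an eigenvector for `θ j` and `v ∈ T k` with `k < j`, write `v = u + w` with
`u ∈ U k`, `w ∈ T (k + 1)`. Modulo `T (k + 1)`, `0 = (A - θ j) v ≡ (θ k - θ j) u`, so `u = 0` by
directness; hence `V j ≤ T j`.

`T ≤ S`, by downward induction: for `v ∈ T i`, `(A - θ i) v ∈ T (i + 1) = S (i + 1)`, and
`A - θ i` maps `S (i + 1)` onto itself since it acts on each `V j`, `j > i`, as the nonzero scalar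
`θ j - θ i`. Subtracting a preimage `w ∈ S (i + 1)` from `v` leaves an eigenvector for `θ i`.
-/

noncomputable section

def IsDecomposition {K V : Type*} [Field K] [AddCommGroup V] [Module K V]
    (d : ℕ) (U : ℕ → Submodule K V) : Prop :=
  (∀ i, i ≤ d → U i ≠ ⊥) ∧ (∀ i, d < i → U i = ⊥) ∧
  (⨆ i, U i) = ⊤ ∧
  ∀ i, Disjoint (U i) (⨆ j, ⨆ _ : j ≠ i, U j)

theorem zpow_injective_of_pow_ne_one {K : Type*} [Field K] {q : K} (hq : q ≠ 0)
    (hq1 : ∀ n : ℕ, 0 < n → q ^ n ≠ 1) : Function.Injective fun n : ℤ => q ^ n := by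
  have hfin : ¬IsOfFinOrder (Units.mk0 q hq) := by
    rw [isOfFinOrder_iff_pow_eq_one]
    rintro ⟨n, hn, h⟩
    exact hq1 n hn (by simpa [Units.ext_iff] using h)
  intro m n h
  apply injective_zpow_iff_not_isOfFinOrder.mpr hfin
  simpa [Units.ext_iff] using h

section TailSup

variable {α : Type*} [CompleteLattice α] {d : ℕ} {U : ℕ → α} {i j : ℕ}

def tailSup (d : ℕ) (U : ℕ → α) (i : ℕ) : α :=
  ⨆ j, ⨆ _ : i ≤ j ∧ j ≤ d, U j

theorem le_tailSup (hij : i ≤ j) (hjd : j ≤ d) : U j ≤ tailSup d U i :=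
  le_iSup₂_of_le (f := fun j (_ : i ≤ j ∧ j ≤ d) => U j) j ⟨hij, hjd⟩ le_rfl

theorem tailSup_le {a : α} (h : ∀ j, i ≤ j → j ≤ d → U j ≤ a) : tailSup d U i ≤ a :=
  iSup₂_le fun j hj => h j hj.1 hj.2

theorem tailSup_congr {U' : ℕ → α} (h : ∀ j, i ≤ j → j ≤ d → U j = U' j) :
    tailSup d U i = tailSup d U' i :=
  iSup_congr fun j => iSup_congr fun hj => h j hj.1 hj.2

theorem tailSup_antitone : Antitone (tailSup d U) := fun _ _ hik =>
  tailSup_le fun _ hkj hjd => le_tailSup (hik.trans hkj) hjd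

theorem tailSup_eq_bot_of_lt (hi : d < i) : tailSup d U i = ⊥ :=
  le_bot_iff.mp <| tailSup_le fun _ hij hjd => absurd (hij.trans hjd) (by omega)

theorem tailSup_eq_sup_succ (hi : i ≤ d) : tailSup d U i = U i ⊔ tailSup d U (i + 1) :=
  le_antisymm
    (tailSup_le fun j hij hjd => by
      rcases hij.eq_or_lt with rfl | hlt
      · exact le_sup_left
      · exact le_sup_of_le_right (le_tailSup hlt hjd))
    (sup_le (le_tailSup le_rfl hi) (tailSup_antitone i.le_succ))

theorem le_tailSup_of_le (hUbot : ∀ j, d < j → U j = ⊥) (hij : i ≤ j) : U j ≤ tailSup d U i := by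
  rcases le_or_gt j d with hjd | hdj
  · exact le_tailSup hij hjd
  · simp [hUbot j hdj]

theorem tailSup_zero_eq_iSup (hUbot : ∀ j, d < j → U j = ⊥) : tailSup d U 0 = ⨆ j, U j :=
  le_antisymm (tailSup_le fun j _ _ => le_iSup U j)
    (iSup_le fun _ => le_tailSup_of_le hUbot (Nat.zero_le _))

theorem disjoint_tailSup_succ (h : Disjoint (U i) (⨆ j, ⨆ _ : j ≠ i, U j)) :
    Disjoint (U i) (tailSup d U (i + 1)) :=
  h.mono_right <| tailSup_le fun j hij _ =>
    le_iSup₂_of_le (f := fun j (_ : j ≠ i) => U j) j (by omega) le_rfl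

end TailSup

theorem Submodule.map_tailSup {R M N : Type*} [Semiring R] [AddCommMonoid M] [Module R M]
    [AddCommMonoid N] [Module R N] (f : M →ₗ[R] N) (d : ℕ) (U : ℕ → Submodule R M) (i : ℕ) :
    (tailSup d U i).map f = tailSup d (fun j => (U j).map f) i := by
  simp only [tailSup, Submodule.map_iSup]

namespace Module.End

variable {K V : Type*} [Field K] [AddCommGroup V] [Module K V]

theorem sub_smul_one_apply (A : End K V) (c : K) (v : V) : (A - c • 1) v = A v - c • v := by
  simp

theorem sub_smul_one_mem_invtSubmodule {A : End K V} {W : Submodule K V}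
    (hW : W ∈ A.invtSubmodule) (c : K) : W ∈ (A - c • 1).invtSubmodule := fun v hv => by
  have hAv : A v ∈ W := hW hv
  simpa using sub_mem hAv (W.smul_mem c hv)

theorem map_sub_smul_one_eigenspace (A : End K V) {a b : K} (hab : a ≠ b) :
    (A.eigenspace b).map (A - a • 1) = A.eigenspace b := by
  apply le_antisymm
  · rintro _ ⟨v, hv, rfl⟩
    rw [SetLike.mem_coe, mem_eigenspace_iff] at hv
    rw [mem_eigenspace_iff]
    simp [hv, smul_sub, smul_comm a b]
  · intro v hv
    refine ⟨(b - a)⁻¹ • v, (A.eigenspace b).smul_mem _ hv, ?_⟩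
    rw [mem_eigenspace_iff] at hv
    simp [hv, ← sub_smul, smul_smul, sub_ne_zero.mpr hab.symm]

theorem mem_of_mem_sup_of_sub_smul_mem {A : End K V} {P W : Submodule K V} {a b : K}
    (hPW : Disjoint P W) (hW : W ∈ A.invtSubmodule) (hP : P.map (A - a • 1) ≤ W) (hab : a ≠ b)
    {v : V} (hv : v ∈ P ⊔ W) (hAv : (A - b • 1) v ∈ W) : v ∈ W := by
  obtain ⟨u, hu, w, hw, rfl⟩ := Submodule.mem_sup.mp hv
  have hAu : (A - a • 1) u + (a - b) • u + (A - b • 1) w = (A - b • 1) (u + w) := by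
    simp only [sub_smul_one_apply, map_add, sub_smul]
    abel
  have hu' : (a - b) • u ∈ W := by
    have := sub_mem (sub_mem hAv (sub_smul_one_mem_invtSubmodule hW b hw))
      (hP ⟨u, hu, rfl⟩)
    rwa [← hAu, add_sub_cancel_right, add_sub_cancel_left] at this
  have hu0 : (a - b) • u = 0 :=
    Submodule.disjoint_def.mp hPW _ (P.smul_mem _ hu) hu'
  rw [smul_eq_zero_iff_right (sub_ne_zero.mpr hab)] at hu0
  simpa [hu0] using hw

end Module.End

section Flag

open Module End

variable {K V : Type*} [Field K] [AddCommGroup V] [Module K V]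
  {d : ℕ} {U : ℕ → Submodule K V} {A : End K V} {θ : ℕ → K}

theorem tailSup_mem_invtSubmodule (hUbot : ∀ j, d < j → U j = ⊥)
    (hA : ∀ j, j ≤ d → (U j).map (A - θ j • 1) ≤ U (j + 1)) (i : ℕ) :
    tailSup d U i ∈ A.invtSubmodule := by
  rw [mem_invtSubmodule_iff_map_le, Submodule.map_tailSup]
  refine tailSup_le fun j hij hjd => ?_
  rintro _ ⟨u, hu, rfl⟩
  have hAu : A u = (A - θ j • 1) u + θ j • u := by simp
  rw [hAu]
  exact add_mem (le_tailSup_of_le hUbot (by omega) (hA j hjd ⟨u, hu, rfl⟩))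
    (Submodule.smul_mem _ _ (le_tailSup (U := U) hij hjd hu))

theorem map_tailSup_le_tailSup_succ (hUbot : ∀ j, d < j → U j = ⊥)
    (hA : ∀ j, j ≤ d → (U j).map (A - θ j • 1) ≤ U (j + 1)) {i : ℕ} (hi : i ≤ d) :
    (tailSup d U i).map (A - θ i • 1) ≤ tailSup d U (i + 1) := by
  rw [tailSup_eq_sup_succ hi, Submodule.map_sup]
  exact sup_le ((hA i hi).trans (le_tailSup_of_le hUbot le_rfl))
    ((mem_invtSubmodule_iff_map_le _).mp
      (sub_smul_one_mem_invtSubmodule (tailSup_mem_invtSubmodule hUbot hA _) _))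

theorem eigenspace_le_tailSup (hUbot : ∀ j, d < j → U j = ⊥) (hUtop : (⨆ j, U j) = ⊤)
    (hUdisj : ∀ j, Disjoint (U j) (⨆ k, ⨆ _ : k ≠ j, U k)) (hθ : Set.InjOn θ (Set.Iic d))
    (hA : ∀ j, j ≤ d → (U j).map (A - θ j • 1) ≤ U (j + 1)) {j : ℕ} (hjd : j ≤ d) :
    A.eigenspace (θ j) ≤ tailSup d U j := by
  suffices ∀ k, k ≤ j → A.eigenspace (θ j) ≤ tailSup d U k from this j le_rfl
  intro k
  induction k with
  | zero => simp [tailSup_zero_eq_iSup hUbot, hUtop]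
  | succ k ih =>
    intro hkj v hv
    have hθkj : θ k ≠ θ j := fun h => by
      have := hθ (Set.mem_Iic.mpr (by omega)) (Set.mem_Iic.mpr hjd) h
      omega
    refine mem_of_mem_sup_of_sub_smul_mem (disjoint_tailSup_succ (hUdisj k))
      (tailSup_mem_invtSubmodule hUbot hA _)
      ((hA k (by omega)).trans (le_tailSup le_rfl (by omega))) hθkj ?_ ?_
    · rw [← tailSup_eq_sup_succ (by omega)]
      exact ih (by omega) hv
    · rw [eigenspace_def, LinearMap.mem_ker] at hv
      rw [hv]
      exact zero_mem _

theorem tailSup_le_tailSup_eigenspace (hUbot : ∀ j, d < j → U j = ⊥)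
    (hθ : Set.InjOn θ (Set.Iic d)) (hA : ∀ j, j ≤ d → (U j).map (A - θ j • 1) ≤ U (j + 1))
    {i : ℕ} (hi : i ≤ d + 1) :
    tailSup d U i ≤ tailSup d (fun j => A.eigenspace (θ j)) i := by
  induction hi using Nat.decreasingInduction with
  | self => simp [tailSup_eq_bot_of_lt (Nat.lt_succ_self d)]
  | of_succ k hk ih =>
    have hkd : k ≤ d := by omega
    have hS : (tailSup d (fun j => A.eigenspace (θ j)) (k + 1)).map (A - θ k • 1) =
        tailSup d (fun j => A.eigenspace (θ j)) (k + 1) := by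
      rw [Submodule.map_tailSup]
      refine tailSup_congr fun j hkj hjd => map_sub_smul_one_eigenspace A fun h => ?_
      have := hθ (Set.mem_Iic.mpr hkd) (Set.mem_Iic.mpr hjd) h
      omega
    intro v hv
    obtain ⟨w, hw, hwv⟩ : (A - θ k • 1) v ∈ (tailSup d (fun j => A.eigenspace (θ j)) (k + 1)).map
        (A - θ k • 1) := hS ▸ ih (map_tailSup_le_tailSup_succ hUbot hA hkd ⟨v, hv, rfl⟩)
    have hvw : v - w ∈ A.eigenspace (θ k) := by
      rw [eigenspace_def, LinearMap.mem_ker, map_sub, hwv, sub_self]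
    rw [tailSup_eq_sup_succ hkd, ← sub_add_cancel v w]
    exact Submodule.add_mem_sup hvw hw

theorem tailSup_eigenspace_eq (hUbot : ∀ j, d < j → U j = ⊥) (hUtop : (⨆ j, U j) = ⊤)
    (hUdisj : ∀ j, Disjoint (U j) (⨆ k, ⨆ _ : k ≠ j, U k)) (hθ : Set.InjOn θ (Set.Iic d))
    (hA : ∀ j, j ≤ d → (U j).map (A - θ j • 1) ≤ U (j + 1)) (i : ℕ) :
    tailSup d (fun j => A.eigenspace (θ j)) i = tailSup d U i := by
  rcases le_or_gt i (d + 1) with hi | hi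
  · exact le_antisymm
      (tailSup_le fun j hij hjd =>
        (eigenspace_le_tailSup hUbot hUtop hUdisj hθ hA hjd).trans (tailSup_antitone hij))
      (tailSup_le_tailSup_eigenspace hUbot hθ hA hi)
  · rw [tailSup_eq_bot_of_lt (by omega), tailSup_eq_bot_of_lt (by omega)]

end Flag

theorem statement5_general {K : Type*} [Field K]
    (q : K) (hq : q ≠ 0) (hq1 : ∀ n : ℕ, 0 < n → q ^ n ≠ 1)
    {V : Type*} [AddCommGroup V] [Module K V]
    (d : ℕ) (U : ℕ → Submodule K V) (hU : IsDecomposition d U)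
    (A : Module.End K V)
    (hA : ∀ i, i ≤ d → ∀ u ∈ U i, A u - q ^ (2 * (i : ℤ) - d) • u ∈ U (i + 1)) :
    ∀ i, i ≤ d →
      (⨆ j, ⨆ _ : i ≤ j ∧ j ≤ d, Module.End.eigenspace A (q ^ (2 * (j : ℤ) - d))) =
        ⨆ j, ⨆ _ : i ≤ j ∧ j ≤ d, U j := by
  obtain ⟨-, hUbot, hUtop, hUdisj⟩ := hU
  have hθ : Set.InjOn (fun j : ℕ => q ^ (2 * (j : ℤ) - d)) (Set.Iic d) := fun j _ k _ h => by
    have := zpow_injective_of_pow_ne_one hq hq1 h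
    omega
  have hA' : ∀ j, j ≤ d → (U j).map (A - q ^ (2 * (j : ℤ) - d) • 1) ≤ U (j + 1) := by
    rintro j hj _ ⟨u, hu, rfl⟩
    simpa using hA j hj u hu
  intro i _
  exact tailSup_eigenspace_eq hUbot hUtop hUdisj hθ hA' i

/-- Lemma 6.8(i): if `(A − q^{2i−d} I) U_i ⊆ U_{i+1}` for `0 ≤ i ≤ d`, and `V_j`
denotes the eigenspace of `A` for `q^{2j−d}`, then `V_i + ⋯ + V_d = U_i + ⋯ + U_d` for
`0 ≤ i ≤ d`. -/
theorem statement5 {K : Type*} [Field K] [IsAlgClosed K] [CharZero K]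
    (q : K) (hq : q ≠ 0) (hq1 : ∀ n : ℕ, 0 < n → q ^ n ≠ 1)
    {V : Type*} [AddCommGroup V] [Module K V] [FiniteDimensional K V]
    (d : ℕ) (U : ℕ → Submodule K V) (hU : IsDecomposition d U)
    (A : Module.End K V)
    (hA : ∀ i, i ≤ d → ∀ u ∈ U i, A u - q ^ (2 * (i : ℤ) - d) • u ∈ U (i + 1)) :
    ∀ i, i ≤ d →
      (⨆ j, ⨆ _ : i ≤ j ∧ j ≤ d, Module.End.eigenspace A (q ^ (2 * (j : ℤ) - d))) =
        ⨆ j, ⨆ _ : i ≤ j ∧ j ≤ d, U j :=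
  statement5_general q hq hq1 d U hU A hA
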